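/- arXiv:2010.08611 — 2 statements merged into one kernel-verified Lean document; each statement's English description precedes it below -/
import Mathlib

section
/- Let G be an MPDAG, and let p = <A1 = V0, V1, ..., Vk = Y1> (k > 1) be a shortest proper possibly causal path from A to Y in G starting with undirected edge A1 - V1. If p is shielded, then for some r with 2 <= r <= k, the directed edges A1 -> Vi are in G for all i in {2, ..., r}, and the path <A1, Vr> followed by p(Vr, Y1) is an unshielded possibly causal path in G. -/
/-- A partially directed graph: directed edges `dir` and undirected edges `undir`. -/
structure PDAG (V : Type) where
  dir : V → V → Prop
  undir : V → V → Prop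
  undir_symm : ∀ a b, undir a b → undir b a

namespace PDAG

variable {V : Type}

/-- Two nodes are adjacent if joined by a directed or undirected edge. -/
def adj (G : PDAG V) (a b : V) : Prop := G.dir a b ∨ G.dir b a ∨ G.undir a b

/-- Each pair of nodes is joined by at most one edge, and no self loops. -/
def Wellformed (G : PDAG V) : Prop :=
  (∀ a b, ¬ (G.dir a b ∧ G.dir b a)) ∧ (∀ a b, ¬ (G.dir a b ∧ G.undir a b)) ∧
  (∀ a, ¬ G.undir a a)

/-- No directed cycles. -/
def Acyclic (G : PDAG V) : Prop := ∀ a, ¬ Relation.TransGen G.dir a a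

/-- Closure under Meek's orientation rules R1–R4. -/
def MeekClosed (G : PDAG V) : Prop :=
  (∀ a b c, G.dir a b → G.undir b c → ¬ G.adj a c → G.dir b c) ∧
  (∀ a b c, G.dir a c → G.dir c b → G.undir a b → G.dir a b) ∧
  (∀ a b c d, G.undir a b → G.undir a c → G.undir a d → G.dir c b → G.dir d b →
    ¬ G.adj c d → G.dir a b) ∧
  (∀ a b c d, G.undir d a → G.undir d b → G.undir d c → G.dir a b → G.dir b c →
    ¬ G.adj a c → G.dir d c)

/-- A maximally oriented PDAG. -/
def IsMPDAG (G : PDAG V) : Prop := G.Wellformed ∧ G.Acyclic ∧ G.MeekClosed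

/-- A DAG: acyclic, no undirected edges. -/
def IsDAG (G : PDAG V) : Prop := G.Wellformed ∧ G.Acyclic ∧ ∀ a b, ¬ G.undir a b

/-- A path: at least two distinct nodes, consecutive ones adjacent. -/
def IsPath (G : PDAG V) (p : List V) : Prop :=
  2 ≤ p.length ∧ p.Nodup ∧ List.Chain' G.adj p

/-- Possibly causal path: no edge `Vi ← Vj` in `G` for `i < j` among the path's nodes. -/
def PossiblyCausal (G : PDAG V) (p : List V) : Prop :=
  p.Pairwise (fun a b => ¬ G.dir b a)

/-- Causal path: every consecutive edge directed forwards. -/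
def Causal (G : PDAG V) (p : List V) : Prop := List.Chain' G.dir p

/-- Unshielded path: endpoints of every consecutive triple are nonadjacent. -/
def Unshielded (G : PDAG V) (p : List V) : Prop :=
  ∀ a b c, [a, b, c] <:+: p → ¬ G.adj a c

/-- Proper path w.r.t. `A`: only the first node is in `A`. -/
def ProperFrom (A : Set V) (p : List V) : Prop :=
  ∃ a t, p = a :: t ∧ a ∈ A ∧ ∀ x ∈ t, x ∉ A

/-- The path ends in the set `Y`. -/
def EndsIn (p : List V) (Y : Set V) : Prop := ∃ y, p.getLast? = some y ∧ y ∈ Y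

/-- The path starts with an undirected edge. -/
def StartsUndir (G : PDAG V) (p : List V) : Prop :=
  ∃ a b t, p = a :: b :: t ∧ G.undir a b

/-- The path starts with a directed edge. -/
def StartsDir (G : PDAG V) (p : List V) : Prop :=
  ∃ a b t, p = a :: b :: t ∧ G.dir a b

/-- A proper possibly causal path from `A` to `Y`. -/
def PPCPath (G : PDAG V) (A Y : Set V) (p : List V) : Prop :=
  G.IsPath p ∧ G.PossiblyCausal p ∧ ProperFrom A p ∧ EndsIn p Y

/-- Perković's identifiability condition: every proper possibly causal path from `A`
to `Y` starts with a directed edge. -/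
def IdCond (G : PDAG V) (A Y : Set V) : Prop :=
  ∀ p, G.PPCPath A Y p → G.StartsDir p

/-- A violating path: proper possibly causal from `A` to `Y` starting with an
undirected edge. -/
def ViolPath (G : PDAG V) (A Y : Set V) (p : List V) : Prop :=
  G.PPCPath A Y p ∧ G.StartsUndir p

/-- A shortest violating path. -/
def ShortestViol (G : PDAG V) (A Y : Set V) (p : List V) : Prop :=
  G.ViolPath A Y p ∧ ∀ q, G.ViolPath A Y q → p.length ≤ q.length

/-- Same adjacencies. -/
def SameAdj (G' G : PDAG V) : Prop := ∀ a b, G'.adj a b ↔ G.adj a b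

/-- Same unshielded colliders. -/
def SameUC (G' G : PDAG V) : Prop :=
  ∀ a b c, (G'.dir a b ∧ G'.dir c b ∧ ¬ G'.adj a c) ↔
    (G.dir a b ∧ G.dir c b ∧ ¬ G.adj a c)

/-- `G'` is represented by `G`: same adjacencies, same unshielded colliders, and
every directed edge of `G` appears in `G'`. -/
def RepresentedBy (G' G : PDAG V) : Prop :=
  SameAdj G' G ∧ SameUC G' G ∧ ∀ a b, G.dir a b → G'.dir a b

/-- `G1 = MPDAG(G, {A1 → V1})`: the least maximally oriented graph represented by `G`
containing the orientation `A1 → V1`. -/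
def IsOrientClosure (G : PDAG V) (A1 V1 : V) (G1 : PDAG V) : Prop :=
  G1.IsMPDAG ∧ RepresentedBy G1 G ∧ G1.dir A1 V1 ∧
  (∀ a b, G1.undir a b ↔ (G.adj a b ∧ ¬ G1.dir a b ∧ ¬ G1.dir b a)) ∧
  (∀ H : PDAG V, H.IsMPDAG → RepresentedBy H G → H.dir A1 V1 →
    ∀ a b, G1.dir a b → H.dir a b)

end PDAG

/-!
Shortcuts in a shortest violating path `p = ⟨A1, V1, …⟩` would produce a shorter one: if
`a, b, c` are consecutive on `p` after `A1` and `a, c` are adjacent, deleting `b` keeps every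
defining property of a violating path, and an undirected edge `A1 - w` to a node `w` beyond
`V1` gives the violating path `⟨A1, w, …⟩`. Hence the only possible shield of `p` is the
triple `A1, V1, V2`, and every edge from `A1` to a node beyond `V1` is `A1 → w`, since
`w → A1` contradicts possible causality. Let `V2, …, Vr` be the longest run of nodes
adjacent to `A1`; then `⟨A1, Vr⟩ ⊕ p(Vr, Y1)` is unshielded: its first triple by maximality
of `r`, the others because they are triples of `p` after `A1`.
-/

theorem List.IsChain.shortcut {α : Type*} {R : α → α → Prop} {l m : List α} {a b c : α}
    (h : List.IsChain R (l ++ a :: b :: c :: m)) (hac : R a c) :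
    List.IsChain R (l ++ a :: c :: m) := by
  rw [List.isChain_append] at h ⊢
  obtain ⟨hl, habc, hjoin⟩ := h
  rw [List.isChain_cons_cons, List.isChain_cons_cons] at habc
  exact ⟨hl, List.isChain_cons_cons.2 ⟨hac, habc.2.2⟩, hjoin⟩

theorem List.exists_longest_prefix_forall {α : Type*} {P : α → Prop} (a : α) (l : List α)
    (ha : P a) :
    ∃ pre x post, a :: l = pre ++ x :: post ∧ (∀ y ∈ pre, P y) ∧ P x ∧
      ∀ y ∈ post.head?, ¬ P y := by
  induction l generalizing a with
  | nil => exact ⟨[], a, [], rfl, by simp, ha, by simp⟩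
  | cons b l ih =>
    by_cases hb : P b
    · obtain ⟨pre, x, post, hsplit, hpre, hx, hpost⟩ := ih b hb
      refine ⟨a :: pre, x, post, by rw [hsplit]; rfl, ?_, hx, hpost⟩
      simpa [ha] using hpre
    · exact ⟨[], a, b :: l, rfl, by simp, ha, by simpa using hb⟩

namespace PDAG

variable {V : Type} {G : PDAG V} {A Y : Set V}

theorem startsUndir_cons_append {x : V} {u v w : List V} (hu : u ≠ [])
    (h : G.StartsUndir (x :: (u ++ v))) : G.StartsUndir (x :: (u ++ w)) := by
  obtain ⟨a, b, s, hp, hab⟩ := h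
  cases u with
  | nil => exact absurd rfl hu
  | cons y u =>
    obtain ⟨rfl, rfl, -⟩ := by simpa using hp
    exact ⟨_, _, u ++ w, rfl, hab⟩

theorem ShortestViol.not_isChain_of_delete {a : V} {u d v : List V}
    (hp : G.ShortestViol A Y (a :: (u ++ d ++ v))) (hd : d ≠ []) (hv : v ≠ [])
    (hstart : G.StartsUndir (a :: (u ++ v))) : ¬ List.IsChain G.adj (a :: (u ++ v)) := by
  intro hchain
  obtain ⟨⟨⟨⟨-, hnodup, -⟩, hpc, hproper, y, hy, hyY⟩, -⟩, hmin⟩ := hp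
  obtain ⟨a', s, hs, ha, hnotA⟩ := hproper
  obtain ⟨rfl, rfl⟩ := List.cons_eq_cons.1 hs
  have hsub : (a :: (u ++ v)).Sublist (a :: (u ++ d ++ v)) :=
    ((List.sublist_append_right d v).append_left u).cons_cons a |>.trans (by simp)
  have hviol : G.ViolPath A Y (a :: (u ++ v)) := by
    refine ⟨⟨⟨?_, hnodup.sublist hsub, hchain⟩, hpc.sublist hsub, ?_, y, ?_, hyY⟩, hstart⟩
    · cases v with
      | nil => exact absurd rfl hv
      | cons => simp only [List.length_cons, List.length_append]; omega
    · refine ⟨a, u ++ v, rfl, ha, fun x hx => hnotA x ?_⟩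
      simp only [List.mem_append] at hx ⊢
      tauto
    · rw [← List.cons_append, List.getLast?_append_of_ne_nil _ hv]
      rwa [← List.cons_append, List.getLast?_append_of_ne_nil _ hv] at hy
  have hle := hmin _ hviol
  have hdlen : 0 < d.length := List.length_pos_iff.2 hd
  simp only [List.length_cons, List.length_append] at hle
  omega

theorem ShortestViol.not_adj_of_infix {a₀ a b c : V} {s : List V}
    (hp : G.ShortestViol A Y (a₀ :: s)) (h : [a, b, c] <:+: s) : ¬ G.adj a c := by
  intro hac
  obtain ⟨l, m, rfl⟩ := h
  have ⟨⟨⟨⟨_, _, hchain⟩, _⟩, hstart⟩, _⟩ := hp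
  have hp' : G.ShortestViol A Y (a₀ :: ((l ++ [a]) ++ [b] ++ c :: m)) := by simpa using hp
  refine hp'.not_isChain_of_delete (by simp) (by simp) ?_ ?_
  · exact startsUndir_cons_append (v := b :: c :: m) (by simp) (by simpa using hstart)
  · simp only [List.append_assoc, List.cons_append, List.nil_append] at hchain
    simpa using List.IsChain.shortcut (l := a₀ :: l) hchain hac

theorem ShortestViol.dir_of_adj {a b w : V} {s : List V}
    (hp : G.ShortestViol A Y (a :: b :: s)) (hw : w ∈ s) (hadj : G.adj a w) : G.dir a w := by
  obtain ⟨l, m, rfl⟩ := List.append_of_mem hw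
  have ⟨⟨⟨⟨_, _, hchain⟩, hpc, _⟩, _⟩, _⟩ := hp
  rcases hadj with hdir | hback | hundir
  · exact hdir
  · simp only [PossiblyCausal, List.pairwise_cons] at hpc
    exact absurd hback (hpc.1 w (by simp))
  · have hp' : G.ShortestViol A Y (a :: ([] ++ (b :: l) ++ w :: m)) := by simpa using hp
    refine absurd ?_ (hp'.not_isChain_of_delete (by simp) (by simp) ⟨a, w, m, rfl, hundir⟩)
    have htail : List.IsChain G.adj (w :: m) := hchain.infix ⟨a :: b :: l, [], by simp⟩
    exact List.isChain_cons_cons.2 ⟨Or.inr (Or.inr hundir), htail⟩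

theorem ShortestViol.exists_adj_third_of_not_unshielded {a b : V} {t : List V}
    (hp : G.ShortestViol A Y (a :: b :: t)) (hsh : ¬ G.Unshielded (a :: b :: t)) :
    ∃ c t', t = c :: t' ∧ G.adj a c := by
  simp only [Unshielded, not_forall, not_not] at hsh
  obtain ⟨a', b', c, hinfix, hadj⟩ := hsh
  rcases List.infix_cons_iff.1 hinfix with ⟨t', ht⟩ | hinner
  · simp only [List.cons_append, List.nil_append, List.cons.injEq] at ht
    obtain ⟨rfl, rfl, rfl⟩ := ht
    exact ⟨c, _, rfl, hadj⟩
  · exact absurd hadj (hp.not_adj_of_infix hinner)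

theorem ShortestViol.unshielded_cons_of_infix {a x : V} {s post : List V}
    (hp : G.ShortestViol A Y (a :: s)) (hinfix : x :: post <:+: s)
    (hpost : ∀ y ∈ post.head?, ¬ G.adj a y) : G.Unshielded (a :: x :: post) := by
  intro a' b' c hinfix'
  rcases List.infix_cons_iff.1 hinfix' with ⟨t', ht⟩ | hinner
  · simp only [List.cons_append, List.nil_append, List.cons.injEq] at ht
    obtain ⟨rfl, rfl, rfl⟩ := ht
    exact hpost c (by simp)
  · exact hp.not_adj_of_infix (hinner.trans hinfix)

end PDAG

theorem stmt8_general {V : Type} (G : PDAG V) (A Y : Set V)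
    (p : List V) (A1 V1 : V) (t : List V)
    (hpe : p = A1 :: V1 :: t)
    (hshort : G.ShortestViol A Y p) (hsh : ¬ G.Unshielded p) :
    ∃ r, 2 ≤ r ∧ r ≤ p.length - 1 ∧
      (∀ i w, 2 ≤ i → i ≤ r → p[i]? = some w → G.dir A1 w) ∧
      G.IsPath (A1 :: p.drop r) ∧ G.Unshielded (A1 :: p.drop r) ∧
      G.PossiblyCausal (A1 :: p.drop r) := by
  subst hpe
  obtain ⟨V2, t2, rfl, hadj2⟩ := hshort.exists_adj_third_of_not_unshielded hsh
  obtain ⟨pre, x, post, hsplit, hpre, hx, hpost⟩ :=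
    List.exists_longest_prefix_forall (P := G.adj A1) V2 t2 hadj2
  rw [hsplit] at hshort ⊢
  have ⟨⟨⟨⟨_, hnodup, hchain⟩, hpc, _⟩, _⟩, _⟩ := hshort
  have hdir : ∀ w ∈ pre ++ [x], G.dir A1 w := by
    intro w hw
    have hw' : w ∈ pre ∨ w = x := by simpa using hw
    refine hshort.dir_of_adj (by simp only [List.mem_append, List.mem_cons]; tauto) ?_
    rcases hw' with hw' | rfl
    exacts [hpre w hw', hx]
  have hsub : (A1 :: x :: post).Sublist (A1 :: V1 :: (pre ++ x :: post)) :=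
    ((List.sublist_append_right pre _).cons V1).cons_cons A1
  refine ⟨pre.length + 2, le_add_self, by simp, ?_, ?_⟩
  · rintro i w hi hir hw
    obtain ⟨j, rfl⟩ : ∃ j, i = j + 2 := ⟨i - 2, by omega⟩
    rw [List.getElem?_cons_succ, List.getElem?_cons_succ, ← List.singleton_append,
      ← List.append_assoc, List.getElem?_append_left (by rw [List.length_append]; simp only [List.length_singleton]; omega)] at hw
    exact hdir w (List.mem_of_getElem? hw)
  simp only [List.drop_succ_cons, List.drop_left]
  refine ⟨⟨by simp, hnodup.sublist hsub, ?_⟩, ?_, hpc.sublist hsub⟩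
  · exact List.isChain_cons_cons.2 ⟨Or.inl (hdir x (by simp)),
      hchain.infix ⟨A1 :: V1 :: pre, [], by simp⟩⟩
  · exact hshort.unshielded_cons_of_infix ⟨V1 :: pre, [], by simp⟩ hpost

/-- If `p = ⟨A1, V1, …, Vk = Y1⟩` (`k > 1`) is a shielded shortest proper possibly
causal path from `A` to `Y` in MPDAG `G` starting with the undirected edge
`A1 - V1`, then for some `2 ≤ r ≤ k`, `G` contains `A1 → Vi` for all `2 ≤ i ≤ r`,
and `⟨A1, Vr⟩ ⊕ p(Vr, Y1)` is an unshielded possibly causal path in `G`. -/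
theorem stmt8 {V : Type} (G : PDAG V) (hG : G.IsMPDAG) (A Y : Set V)
    (hAY : Disjoint A Y) (p : List V) (A1 V1 : V) (t : List V)
    (hpe : p = A1 :: V1 :: t) (hlen : 2 < p.length)
    (hshort : G.ShortestViol A Y p) (hsh : ¬ G.Unshielded p) :
    ∃ r, 2 ≤ r ∧ r ≤ p.length - 1 ∧
      (∀ i w, 2 ≤ i → i ≤ r → p[i]? = some w → G.dir A1 w) ∧
      G.IsPath (A1 :: p.drop r) ∧ G.Unshielded (A1 :: p.drop r) ∧
      G.PossiblyCausal (A1 :: p.drop r) :=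
  stmt8_general G A Y p A1 V1 t hpe hshort hsh
end

section
/- Let G be an MPDAG, p = <A1, V1, ..., Y1> a shortest proper possibly causal path from A to Y starting with undirected edge A1 - V1, with p shielded so that A1 -> V2 is in G. Let G2 = MPDAG(G, {A1 <- V1}). Then in G2 the edge V1 -> V2 is directed (by acyclicity and Meek's rule R2), and consequently p(V1, Y1) is a fully directed causal path in G2; i.e., the path corresponding to p in G2 has the form A1 <- V1 -> V2 -> ... -> Y1. -/
/-!
In `G2` we have `V1 → A1 → V2` with `V1, V2` adjacent; acyclicity excludes `V2 → V1` and Meek's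
rule R2 excludes `V1 - V2`, so `V1 → V2`. Minimality of `p` makes `p(V1, Y1)` unshielded (a shield
`a ⋯ c` over a triple `a, b, c` would let us skip `b`), and since `G2` has the unshielded colliders
of `G`, possible causality of `p` in `G` forbids `a → b ← c` on it in `G2`. Rule R1 then pushes
the orientation `V1 → V2` along the whole subpath.
-/

namespace PDAG

variable {V : Type}

def ColliderFree (G : PDAG V) (p : List V) : Prop :=
  ∀ a b c, [a, b, c] <:+: p → ¬ (G.dir a b ∧ G.dir c b)

variable {G H : PDAG V} {p q : List V}

theorem Unshielded.of_infix (hp : G.Unshielded p) (hqp : q <:+: p) : G.Unshielded q :=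
  fun a b c h => hp a b c (h.trans hqp)

theorem ColliderFree.of_infix (hp : G.ColliderFree p) (hqp : q <:+: p) : G.ColliderFree q :=
  fun a b c h => hp a b c (h.trans hqp)

theorem Unshielded.of_sameAdj (hp : G.Unshielded p) (hHG : SameAdj H G) : H.Unshielded p :=
  fun a b c h hac => hp a b c h ((hHG a c).1 hac)

theorem PossiblyCausal.colliderFree (hp : G.PossiblyCausal p) : G.ColliderFree p := by
  rintro a b c habc ⟨-, hcb⟩
  have hbc : [b, c].Sublist p := (List.sublist_cons_self a [b, c]).trans habc.sublist
  exact List.rel_of_pairwise_cons (hp.sublist hbc) (List.mem_singleton_self c) hcb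

theorem ColliderFree.of_sameUC (hp : G.ColliderFree p) (hHG : SameUC H G)
    (hu : H.Unshielded p) : H.ColliderFree p :=
  fun a b c h ⟨hab, hcb⟩ =>
    have hG := (hHG a b c).1 ⟨hab, hcb, hu a b c h⟩
    hp a b c h ⟨hG.1, hG.2.1⟩

theorem IsMPDAG.dir_of_dir_of_dir {a b c : V} (hG : G.IsMPDAG) (hac : G.dir a c)
    (hcb : G.dir c b) (hab : G.adj a b) : G.dir a b := by
  obtain ⟨-, hacyc, -, hR2, -⟩ := hG
  rcases hab with hab | hba | hab
  · exact hab
  · exact absurd (.head hac (.head hcb (.single hba))) (hacyc a)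
  · exact hR2 a b c hac hcb hab

theorem MeekClosed.causal_of_startsDir (hG : G.MeekClosed) (hpath : List.IsChain G.adj p)
    (hu : G.Unshielded p) (hcf : G.ColliderFree p) (hstart : G.StartsDir p) : G.Causal p := by
  obtain ⟨a, b, r, rfl, hab⟩ := hstart
  induction r generalizing a b with
  | nil => exact List.isChain_pair.2 hab
  | cons c r ih =>
    have htriple : [a, b, c] <:+: a :: b :: c :: r := ⟨[], r, rfl⟩
    have htail : b :: c :: r <:+: a :: b :: c :: r := List.infix_cons List.infix_rfl
    have hbc : G.dir b c := by
      have hadj : G.adj b c := (List.isChain_cons_cons.1 (List.isChain_cons_cons.1 hpath).2).1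
      rcases hadj with hbc | hcb | hbc
      · exact hbc
      · exact absurd ⟨hab, hcb⟩ (hcf a b c htriple)
      · exact hG.1 a b c hab hbc (hu a b c htriple)
    exact List.isChain_cons_cons.2 ⟨hab,
      ih b c hbc (hpath.infix htail) (hu.of_infix htail) (hcf.of_infix htail)⟩

variable {A Y : Set V}

theorem ViolPath.bypass {x a b c : V} {l s : List V}
    (hp : G.ViolPath A Y (x :: (l ++ a :: b :: c :: s))) (hac : G.adj a c) :
    G.ViolPath A Y (x :: (l ++ a :: c :: s)) := by
  obtain ⟨⟨⟨-, hnodup, hchain⟩, hpc, ⟨x', t, heq, hxA, htA⟩, ⟨y, hlast, hyY⟩⟩, hstart⟩ := hp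
  obtain ⟨rfl, rfl⟩ := List.cons.inj heq
  have htail : (l ++ a :: c :: s).Sublist (l ++ a :: b :: c :: s) :=
    .append_left (.cons_cons a (.cons b (.refl _))) l
  have hsub := htail.cons_cons x
  refine ⟨⟨⟨by simp only [List.length_cons, List.length_append]; omega, hnodup.sublist hsub, ?_⟩,
    hpc.sublist hsub, ⟨x, _, rfl, hxA, fun z hz => htA z (htail.subset hz)⟩,
    ⟨y, by simpa [List.getLast?_cons, List.getLast?_append] using hlast, hyY⟩⟩, ?_⟩
  · rw [← List.cons_append] at hchain ⊢
    obtain ⟨hl, -, hc⟩ := List.isChain_append_cons_cons.1 hchain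
    exact List.isChain_append_cons_cons.2 ⟨hl, hac, hc.tail⟩
  · obtain ⟨x, y, t, heq, hxy⟩ := hstart
    cases l with
    | nil => exact ⟨x, y, c :: s, by simp_all, hxy⟩
    | cons z l => exact ⟨x, y, l ++ a :: c :: s, by simp_all, hxy⟩

theorem ShortestViol.unshielded_tail (hp : G.ShortestViol A Y p) : G.Unshielded p.tail := by
  rintro a b c ⟨l, s, hl⟩ hac
  cases p with
  | nil => simp at hl
  | cons x r =>
    rw [List.tail_cons] at hl
    subst hl
    have hshorter := hp.2 _ (ViolPath.bypass (by simpa using hp.1) hac)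
    simp at hshorter

end PDAG

theorem stmt9_general {V : Type} (G G2 : PDAG V) (A Y : Set V)
    (p : List V) (A1 V1 V2 : V) (t : List V)
    (hpe : p = A1 :: V1 :: V2 :: t) (hshort : G.ShortestViol A Y p)
    (hA1V2 : G.dir A1 V2) (hG2 : G.IsOrientClosure V1 A1 G2) :
    G2.dir V1 V2 ∧ G2.Causal p.tail := by
  obtain ⟨hG2, ⟨hadj, hUC, hlift⟩, hV1A1, -, -⟩ := hG2
  obtain ⟨⟨⟨-, -, hchain⟩, hpc, -, -⟩, -⟩ := hshort.1
  have hchain2 : List.IsChain G2.adj p.tail := hchain.tail.imp fun a b h => (hadj a b).2 h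
  have hV1V2 : G2.dir V1 V2 := by
    refine hG2.dir_of_dir_of_dir hV1A1 (hlift _ _ hA1V2) ?_
    subst hpe
    exact (List.isChain_cons_cons.1 hchain2).1
  have hu : G2.Unshielded p.tail := hshort.unshielded_tail.of_sameAdj hadj
  have hcf : G2.ColliderFree p.tail :=
    (PDAG.PossiblyCausal.colliderFree (hpc.sublist p.tail_sublist)).of_sameUC hUC hu
  exact ⟨hV1V2, hG2.2.2.causal_of_startsDir hchain2 hu hcf ⟨V1, V2, t, by simp [hpe], hV1V2⟩⟩

/-- If `p = ⟨A1, V1, V2, …, Y1⟩` is a shielded shortest proper possibly causal path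
from `A` to `Y` in MPDAG `G` starting with the undirected edge `A1 - V1`, with
`A1 → V2` in `G`, and `G2 = MPDAG(G, {A1 ← V1})`, then `V1 → V2` is in `G2` and the
subpath of `p` from `V1` onwards is a fully directed causal path in `G2`. -/
theorem stmt9 {V : Type} (G G2 : PDAG V) (hG : G.IsMPDAG) (A Y : Set V)
    (hAY : Disjoint A Y) (p : List V) (A1 V1 V2 : V) (t : List V)
    (hpe : p = A1 :: V1 :: V2 :: t) (hshort : G.ShortestViol A Y p)
    (hA1V2 : G.dir A1 V2) (hG2 : G.IsOrientClosure V1 A1 G2) :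
    G2.dir V1 V2 ∧ G2.Causal p.tail :=
  stmt9_general G G2 A Y p A1 V1 V2 t hpe hshort hA1V2 hG2
end
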